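/- arXiv:1803.05895 — 4 statements merged into one kernel-verified Lean document; each statement's English description precedes it below -/
import Mathlib

section
/- Let K be a field of characteristic zero and let D_1, …, D_m : K → K be derivations of K that are linearly independent over K and satisfy [D_i, D_j] ∈ Span_K{D_1, …, D_m} for all i, j, where [D_i, D_j] = D_i∘D_j − D_j∘D_i. Then there exist pairwise commuting derivations δ_1, …, δ_m ∈ Span_K{D_1, …, D_m} that are linearly independent over K. -/
/-!
Let `L` be the `K`-span of the `Dᵢ`; it is closed under the bracket because
`⁅a • X, Y⁆ = a • ⁅X, Y⁆ - Y a • X`. Point evaluations separate the elements of `L`, so they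
span its dual, and `m = dim L` of them, at points `x₁, …, xₘ`, form a basis of the dual.
The dual basis `δ₁, …, δₘ` of `L` satisfies `δᵢ xₖ = [i = k]`, a constant, so `⁅δᵢ, δⱼ⁆` is an
element of `L` vanishing at every `xₖ`, hence zero.
-/

open Module Submodule

theorem exists_bijective_pi_of_separating {K V ι : Type*} [Field K] [AddCommGroup V]
    [Module K V] [FiniteDimensional K V] (f : ι → Dual K V)
    (hf : ∀ v, (∀ i, f i v = 0) → v = 0) {n : ℕ} (hn : finrank K V = n) :
    ∃ x : Fin n → ι, Function.Bijective (LinearMap.pi fun k => f (x k)) := by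
  have hspan : span K (Set.range f) = ⊤ :=
    span_eq_top_of_ne_zero fun v hv => by
      by_contra! h
      exact hv (hf v fun i => h _ ⟨i, rfl⟩)
  obtain ⟨κ, a, -, hspan', hli⟩ := exists_linearIndependent' K f
  let b := Basis.mk hli (hspan'.trans hspan).ge
  let e := b.indexEquiv (finBasisOfFinrankEq K (Dual K V) (Subspace.dual_finrank_eq.trans hn))
  refine ⟨a ∘ e.symm, ?_⟩
  have hinj : Function.Injective (LinearMap.pi fun k => f (a (e.symm k))) := by
    rw [← LinearMap.ker_eq_bot, LinearMap.ker_eq_bot']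
    intro v hv
    have hb : Dual.eval K V v = 0 := b.ext fun j => by
      simpa [b] using congr_fun hv (e j)
    exact (forall_dual_apply_eq_zero_iff K v).mp (LinearMap.ext_iff.mp hb)
  exact ⟨hinj, (LinearMap.injective_iff_surjective_of_finrank_eq_finrank
    (by rw [finrank_fin_fun, hn])).mp hinj⟩

namespace Derivation

variable {R A : Type*} [CommRing R] [CommRing A] [Algebra R A]

theorem commutator_smul_left (a : A) (X Y : Derivation R A A) :
    ⁅a • X, Y⁆ = a • ⁅X, Y⁆ - Y a • X := by
  ext t
  simp only [commutator_apply, smul_apply, sub_apply, leibniz, smul_eq_mul]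
  ring

theorem commutator_smul_right (a : A) (X Y : Derivation R A A) :
    ⁅X, a • Y⁆ = a • ⁅X, Y⁆ + X a • Y := by
  ext t
  simp only [commutator_apply, smul_apply, add_apply, leibniz, smul_eq_mul]
  ring

theorem lie_mem_span_of_lie_mem_span {s : Set (Derivation R A A)}
    (hs : ∀ X ∈ s, ∀ Y ∈ s, ⁅X, Y⁆ ∈ span A s) {X Y : Derivation R A A}
    (hX : X ∈ span A s) (hY : Y ∈ span A s) : ⁅X, Y⁆ ∈ span A s := by
  induction hX, hY using span_induction₂ with
  | mem_mem X Y hX hY => exact hs X hX Y hY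
  | zero_left => simp
  | zero_right => simp
  | add_left _ _ _ _ _ _ h₁ h₂ => rw [add_lie]; exact add_mem h₁ h₂
  | add_right _ _ _ _ _ _ h₁ h₂ => rw [lie_add]; exact add_mem h₁ h₂
  | smul_left _ X _ hX _ h =>
    rw [commutator_smul_left]; exact sub_mem (smul_mem _ _ h) (smul_mem _ _ hX)
  | smul_right _ _ Y _ hY h =>
    rw [commutator_smul_right]; exact add_mem (smul_mem _ _ h) (smul_mem _ _ hY)

theorem map_single_one {ι : Type*} [DecidableEq ι] (D : Derivation R A A) (i k : ι) :
    D ((Pi.single i 1 : ι → A) k) = 0 := by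
  rcases eq_or_ne k i with rfl | h
  · simp
  · simp [h]

def evalₗ (y : A) : Derivation R A A →ₗ[A] A where
  toFun D := D y
  map_add' _ _ := rfl
  map_smul' _ _ := rfl

theorem exists_commuting_basis {K : Type*} [Field K] [Algebra R K]
    (L : Submodule K (Derivation R K K)) [FiniteDimensional K L]
    (hL : ∀ X ∈ L, ∀ Y ∈ L, ⁅X, Y⁆ ∈ L) {n : ℕ} (hn : finrank K L = n) :
    ∃ δ : Fin n → Derivation R K K,
      (∀ i, δ i ∈ L) ∧ LinearIndependent K δ ∧ ∀ i j, ⁅δ i, δ j⁆ = 0 := by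
  obtain ⟨x, hx⟩ := exists_bijective_pi_of_separating (fun y => evalₗ y ∘ₗ L.subtype)
    (fun D hD => Subtype.ext (Derivation.ext hD)) hn
  let e := LinearEquiv.ofBijective _ hx
  let β := (Pi.basisFun K (Fin n)).map e.symm
  have hβ (i k : Fin n) : (β i : Derivation R K K) (x k) = (Pi.single i 1 : Fin n → K) k :=
    congrFun (show e (β i) = Pi.single i 1 by simp [β]) k
  refine ⟨fun i => β i, fun i => (β i).2, β.linearIndependent.map' L.subtype L.ker_subtype,
    fun i j => ?_⟩
  have hmem := hL _ (β i).2 _ (β j).2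
  suffices e ⟨_, hmem⟩ = 0 from congr_arg Subtype.val (e.map_eq_zero_iff.mp this)
  funext k
  change ⁅(β i : Derivation R K K), (β j : Derivation R K K)⁆ (x k) = 0
  rw [commutator_apply, hβ, hβ, map_single_one, map_single_one, sub_zero]

end Derivation

theorem exists_commuting_basis_of_lie_closed_general
    {K : Type*} [Field K] {m : ℕ}
    (D : Fin m → Derivation ℤ K K)
    (hli : LinearIndependent K D)
    (hbr : ∀ i j, ⁅D i, D j⁆ ∈ Submodule.span K (Set.range D)) :
    ∃ δ : Fin m → Derivation ℤ K K,
      (∀ i, δ i ∈ Submodule.span K (Set.range D)) ∧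
      LinearIndependent K δ ∧
      ∀ i j, ⁅δ i, δ j⁆ = 0 := by
  have hclosed : ∀ X ∈ span K (Set.range D), ∀ Y ∈ span K (Set.range D),
      ⁅X, Y⁆ ∈ span K (Set.range D) := fun X hX Y hY =>
    Derivation.lie_mem_span_of_lie_mem_span (by rintro _ ⟨i, rfl⟩ _ ⟨j, rfl⟩; exact hbr i j) hX hY
  have := FiniteDimensional.span_of_finite K (Set.finite_range D)
  exact Derivation.exists_commuting_basis _ hclosed
    ((finrank_span_eq_card hli).trans (Fintype.card_fin m))

/-- If `D₁, …, Dₘ` are derivations of a field `K` of characteristic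
zero that are linearly independent over `K` and whose pairwise Lie brackets lie in
their `K`-linear span, then there are pairwise commuting derivations
`δ₁, …, δₘ` in the span of `D₁, …, Dₘ` that are linearly independent over `K`. -/
theorem exists_commuting_basis_of_lie_closed
    {K : Type*} [Field K] [CharZero K] {m : ℕ}
    (D : Fin m → Derivation ℤ K K)
    (hli : LinearIndependent K D)
    (hbr : ∀ i j, ⁅D i, D j⁆ ∈ Submodule.span K (Set.range D)) :
    ∃ δ : Fin m → Derivation ℤ K K,
      (∀ i, δ i ∈ Submodule.span K (Set.range D)) ∧
      LinearIndependent K δ ∧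
      ∀ i j, ⁅δ i, δ j⁆ = 0 :=
  exists_commuting_basis_of_lie_closed_general D hli hbr
end

section
/- Let K be a field of characteristic zero and let j, j', j'', j''' ∈ K with j ≠ 0, j ≠ 1728, j' ≠ 0, j'' ≠ 0, j''' ≠ 0 and f(j, j', j'', j''') = 0. Let D_1 and D_2 be derivations of K such that for i = 1, 2: j''·D_i(j) = j'·D_i(j') and j'''·D_i(j') = j''·D_i(j'') (equivalently, D_i j / j' = D_i j' / j'' = D_i j'' / j'''). Then the commutator D := D_1∘D_2 − D_2∘D_1 (which is again a derivation of K) satisfies the same relations: j''·D(j) = j'·D(j') and j'''·D(j') = j''·D(j''). -/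
/-- The rational function `f` from the differential equation of the modular
`j`-function:
`f(y₀,y₁,y₂,y₃) = y₃/y₁ - (3/2)(y₂/y₁)² + ((y₀² - 1968 y₀ + 2654208)/(2 y₀² (y₀ - 1728)²)) y₁²`. -/
noncomputable def modularF {K : Type*} [Field K] (y₀ y₁ y₂ y₃ : K) : K :=
  y₃ / y₁ - (3 / 2) * (y₂ / y₁) ^ 2 +
    ((y₀ ^ 2 - 1968 * y₀ + 2654208) / (2 * y₀ ^ 2 * (y₀ - 1728) ^ 2)) * y₁ ^ 2

/-!
Write `Dᵢ j = cᵢ j'`. The hypotheses say that `Dᵢ` maps `(j, j', j'')` to `cᵢ (j', j'', j''')`,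
and the Leibniz rule gives `⁅D₁, D₂⁆ a = (D₁ c₂ - D₂ c₁) b` whenever `Dᵢ a = cᵢ b` and
`c₂ D₁ b = c₁ D₂ b`. For `(a, b) = (j, j')` and `(j', j'')` the last condition is automatic. For
`(j'', j''')` it holds because, once denominators are cleared, `f = 0` becomes a polynomial relation
`P(j, j', j'', j''') = 0` with `∂P/∂y₃ = 2 j' j² (j - 1728)² ≠ 0`; the chain rule then gives
`∂P/∂y₃ · Dᵢ j''' = -cᵢ T` with `T` independent of `i`.
-/

open MvPolynomial

theorem Derivation.map_ofNat {R A M : Type*} [CommSemiring R] [CommSemiring A] [AddCommMonoid M]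
    [Algebra R A] [Module A M] [Module R M] (D : Derivation R A M) (n : ℕ) [n.AtLeastTwo] :
    D (ofNat(n) : A) = 0 := by
  rw [← Nat.cast_ofNat]; exact D.map_natCast n

theorem Derivation.map_aeval_eq_sum_pderiv {σ A : Type*} [Fintype σ] [CommRing A]
    (D : Derivation ℤ A A) (y : σ → A) (P : MvPolynomial σ ℤ) :
    D (aeval y P) = ∑ i, aeval y (pderiv i P) * D (y i) := by
  classical
  induction P using MvPolynomial.induction_on with
  | C a => simp
  | add p q hp hq => simp [hp, hq, Finset.sum_add_distrib, add_mul]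
  | mul_X p i hp =>
    simp [hp, pderiv_X, Pi.single_apply, apply_ite (aeval y), Finset.sum_add_distrib, add_mul,
      Finset.mul_sum, mul_assoc]

theorem Derivation.commutator_apply_of_map_eq_mul {R A : Type*} [CommRing R] [CommRing A]
    [Algebra R A] {D₁ D₂ : Derivation R A A} {a b c₁ c₂ : A}
    (ha₁ : D₁ a = c₁ * b) (ha₂ : D₂ a = c₂ * b) (hb : c₂ * D₁ b = c₁ * D₂ b) :
    ⁅D₁, D₂⁆ a = (D₁ c₂ - D₂ c₁) * b := by
  rw [Derivation.commutator_apply, ha₁, ha₂, Derivation.leibniz, Derivation.leibniz,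
    smul_eq_mul, smul_eq_mul, smul_eq_mul, smul_eq_mul]
  linear_combination hb

theorem mul_map_last_eq_of_aeval_eq_zero {K : Type*} [CommRing K] [IsDomain K] {n : ℕ}
    {P : MvPolynomial (Fin (n + 1)) ℤ} {y : Fin (n + 1) → K} (hP : aeval y P = 0)
    (hlast : aeval y (pderiv (Fin.last n) P) ≠ 0) {D₁ D₂ : Derivation ℤ K K} {c₁ c₂ : K}
    (h₁ : ∀ k : Fin n, D₁ (y k.castSucc) = c₁ * y k.succ)
    (h₂ : ∀ k : Fin n, D₂ (y k.castSucc) = c₂ * y k.succ) :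
    c₂ * D₁ (y (Fin.last n)) = c₁ * D₂ (y (Fin.last n)) := by
  set T := ∑ k : Fin n, aeval y (pderiv k.castSucc P) * y k.succ
  have chain (D : Derivation ℤ K K) (c : K) (h : ∀ k : Fin n, D (y k.castSucc) = c * y k.succ) :
      aeval y (pderiv (Fin.last n) P) * D (y (Fin.last n)) = -(c * T) := by
    have := D.map_aeval_eq_sum_pderiv y P
    rw [hP, D.map_zero, Fin.sum_univ_castSucc] at this
    have hsum : ∑ k : Fin n, aeval y (pderiv k.castSucc P) * D (y k.castSucc) = c * T := by
      simp only [h, T, Finset.mul_sum, mul_left_comm c]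
    linear_combination -this - hsum
  refine mul_left_cancel₀ hlast ?_
  linear_combination c₂ * chain D₁ c₁ h₁ - c₁ * chain D₂ c₂ h₂

theorem exists_proportional_of_cross_mul_eq {K : Type*} [Field K] {x₀ x₁ x₂ z₀ z₁ z₂ : K}
    (h₀ : x₀ ≠ 0) (h₁ : x₁ ≠ 0) (h₀₁ : x₁ * z₀ = x₀ * z₁) (h₁₂ : x₂ * z₁ = x₁ * z₂) :
    ∃ c, z₀ = c * x₀ ∧ z₁ = c * x₁ ∧ z₂ = c * x₂ := by
  refine ⟨z₀ / x₀, by field_simp, ?_, ?_⟩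
  · field_simp
    linear_combination -h₀₁
  · field_simp
    refine mul_left_cancel₀ h₁ ?_
    linear_combination -x₂ * h₀₁ - x₀ * h₁₂

noncomputable def modularPoly : MvPolynomial (Fin 4) ℤ :=
  2 * X 1 * X 0 ^ 2 * (X 0 - 1728) ^ 2 * X 3 - 3 * X 0 ^ 2 * (X 0 - 1728) ^ 2 * X 2 ^ 2 +
    (X 0 ^ 2 - 1968 * X 0 + 2654208) * X 1 ^ 4

theorem aeval_pderiv_three_modularPoly {K : Type*} [CommRing K] (y : Fin 4 → K) :
    aeval y (pderiv 3 modularPoly) = 2 * y 1 * y 0 ^ 2 * (y 0 - 1728) ^ 2 := by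
  simp [modularPoly, Derivation.map_ofNat]

theorem aeval_modularPoly {K : Type*} [Field K] [NeZero (2 : K)] {y₀ y₁ y₂ y₃ : K}
    (h₀ : y₀ ≠ 0) (h₁₇₂₈ : y₀ ≠ 1728) (h₁ : y₁ ≠ 0) :
    aeval ![y₀, y₁, y₂, y₃] modularPoly =
      2 * y₁ ^ 2 * y₀ ^ 2 * (y₀ - 1728) ^ 2 * modularF y₀ y₁ y₂ y₃ := by
  have : y₀ - 1728 ≠ 0 := sub_ne_zero.2 h₁₇₂₈
  simp [modularPoly, modularF]
  field_simp

theorem commutator_preserves_j_relations_general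
    {K : Type*} [Field K] [CharZero K]
    (j j' j'' j''' : K)
    (hj0 : j ≠ 0) (hj1728 : j ≠ 1728) (hj'0 : j' ≠ 0) (hj''0 : j'' ≠ 0)
    (hf : modularF j j' j'' j''' = 0)
    (D₁ D₂ : Derivation ℤ K K)
    (h₁ : j'' * D₁ j = j' * D₁ j') (h₁' : j''' * D₁ j' = j'' * D₁ j'')
    (h₂ : j'' * D₂ j = j' * D₂ j') (h₂' : j''' * D₂ j' = j'' * D₂ j'') :
    j'' * ⁅D₁, D₂⁆ j = j' * ⁅D₁, D₂⁆ j' ∧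
      j''' * ⁅D₁, D₂⁆ j' = j'' * ⁅D₁, D₂⁆ j'' := by
  obtain ⟨c₁, hj₁, hj'₁, hj''₁⟩ := exists_proportional_of_cross_mul_eq hj'0 hj''0 h₁ h₁'
  obtain ⟨c₂, hj₂, hj'₂, hj''₂⟩ := exists_proportional_of_cross_mul_eq hj'0 hj''0 h₂ h₂'
  have hP : aeval ![j, j', j'', j'''] modularPoly = 0 := by
    rw [aeval_modularPoly hj0 hj1728 hj'0, hf, mul_zero]
  have hlast : aeval ![j, j', j'', j'''] (pderiv 3 modularPoly) ≠ 0 := by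
    rw [aeval_pderiv_three_modularPoly]
    simp [hj0, hj'0, sub_eq_zero, hj1728]
  have hj''' : c₂ * D₁ j''' = c₁ * D₂ j''' :=
    mul_map_last_eq_of_aeval_eq_zero hP hlast (by simp [Fin.forall_fin_succ, *])
      (by simp [Fin.forall_fin_succ, *])
  have hcj := Derivation.commutator_apply_of_map_eq_mul hj₁ hj₂ (by rw [hj'₁, hj'₂]; ring)
  have hcj' := Derivation.commutator_apply_of_map_eq_mul hj'₁ hj'₂ (by rw [hj''₁, hj''₂]; ring)
  have hcj'' := Derivation.commutator_apply_of_map_eq_mul hj''₁ hj''₂ hj'''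
  exact ⟨by rw [hcj, hcj']; ring, by rw [hcj', hcj'']; ring⟩

/-- Let `K` be a field of characteristic zero and
`j, j', j'', j''' ∈ K` be nonzero with `j ≠ 1728` and `f(j, j', j'', j''') = 0`.
If `D₁, D₂` are derivations of `K` with `j''·Dᵢ j = j'·Dᵢ j'` and
`j'''·Dᵢ j' = j''·Dᵢ j''` for `i = 1, 2`, then the commutator `⁅D₁, D₂⁆`
satisfies the same relations. -/
theorem commutator_preserves_j_relations
    {K : Type*} [Field K] [CharZero K]
    (j j' j'' j''' : K)
    (hj0 : j ≠ 0) (hj1728 : j ≠ 1728) (hj'0 : j' ≠ 0) (hj''0 : j'' ≠ 0)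
    (hj'''0 : j''' ≠ 0)
    (hf : modularF j j' j'' j''' = 0)
    (D₁ D₂ : Derivation ℤ K K)
    (h₁ : j'' * D₁ j = j' * D₁ j') (h₁' : j''' * D₁ j' = j'' * D₁ j'')
    (h₂ : j'' * D₂ j = j' * D₂ j') (h₂' : j''' * D₂ j' = j'' * D₂ j'') :
    j'' * ⁅D₁, D₂⁆ j = j' * ⁅D₁, D₂⁆ j' ∧
      j''' * ⁅D₁, D₂⁆ j' = j'' * ⁅D₁, D₂⁆ j'' :=
  commutator_preserves_j_relations_general j j' j'' j''' hj0 hj1728 hj'0 hj''0 hf D₁ D₂ h₁ h₁' h₂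
    h₂'
end

section
/- Let (K, D) be a differential field of characteristic zero with field of constants C = ker(D). Let z, j, j', j'', j''' ∈ K satisfy D(z) ≠ 0, j ≠ 0, j ≠ 1728, j' ≠ 0, D(j) = j'·D(z), D(j') = j''·D(z), D(j'') = j'''·D(z), and f(j, j', j'', j''') = 0. Let a, b, c, d ∈ C with ad − bc = 1 and cz + d ≠ 0, and set w := (az + b)/(cz + d). Then there exist J_1, J_2, J_3 ∈ K with J_1 = j'·(cz + d)² such that D(j) = J_1·D(w), D(J_1) = J_2·D(w), D(J_2) = J_3·D(w), and f(j, J_1, J_2, J_3) = 0. -/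
namespace Derivation

variable {R K : Type*} [CommRing R] [Field K] [Algebra R K] (D : Derivation R K K)

theorem map_moebius {a b c d : K} (ha : D a = 0) (hb : D b = 0) (hc : D c = 0) (hd : D d = 0)
    (z : K) : D ((a * z + b) / (c * z + d)) = (a * d - b * c) * D z / (c * z + d) ^ 2 := by
  rw [leibniz_div]
  simp only [map_add, leibniz, ha, hb, hc, hd, smul_eq_mul, div_eq_mul_inv, inv_pow]
  ring

theorem map_mul_pow_of_reparam {z w q c u u' : K} (hu : D u = u' * D z) (hq : D q = c * D z)
    (hz : D z = q ^ 2 * D w) (n : ℕ) :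
    D (u * q ^ n) = (u' * q ^ (n + 2) + n * c * u * q ^ (n + 1)) * D w := by
  cases n with
  | zero =>
    simp only [pow_zero, mul_one, hu, hz, Nat.cast_zero]
    ring
  | succ n =>
    simp only [leibniz, leibniz_pow, hu, hq, hz, smul_eq_mul, nsmul_eq_mul, Nat.add_sub_cancel]
    push_cast
    ring

end Derivation

theorem modularF_reparam {K : Type*} [Field K] (h2 : (2 : K) ≠ 0) (y₀ y₁ y₂ y₃ c q : K) :
    modularF y₀ (y₁ * q ^ 2) (y₂ * q ^ 4 + 2 * c * y₁ * q ^ 3)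
        (y₃ * q ^ 6 + 6 * c * y₂ * q ^ 5 + 6 * c ^ 2 * y₁ * q ^ 4) =
      q ^ 4 * modularF y₀ y₁ y₂ y₃ := by
  rcases eq_or_ne y₁ 0 with rfl | hy₁
  · simp [modularF]
  rcases eq_or_ne q 0 with rfl | hq
  · simp [modularF]
  unfold modularF
  field_simp
  ring

theorem sl2_invariance_of_j_equation_general
    {K : Type*} [Field K] [CharZero K]
    (D : Derivation ℤ K K)
    (z j j' j'' j''' : K)
    (h1 : D j = j' * D z) (h2 : D j' = j'' * D z) (h3 : D j'' = j''' * D z)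
    (hf : modularF j j' j'' j''' = 0)
    (a b c d : K)
    (ha : D a = 0) (hb : D b = 0) (hc : D c = 0) (hd : D d = 0)
    (hdet : a * d - b * c = 1) (hden : c * z + d ≠ 0) :
    ∃ J₁ J₂ J₃ : K,
      J₁ = j' * (c * z + d) ^ 2 ∧
      D j = J₁ * D ((a * z + b) / (c * z + d)) ∧
      D J₁ = J₂ * D ((a * z + b) / (c * z + d)) ∧
      D J₂ = J₃ * D ((a * z + b) / (c * z + d)) ∧
      modularF j J₁ J₂ J₃ = 0 := by
  have hw := D.map_moebius ha hb hc hd z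
  rw [hdet, one_mul] at hw
  set q := c * z + d
  set w := (a * z + b) / q
  have hq : D q = c * D z := by simp [q, hc, hd]
  have hz : D z = q ^ 2 * D w := by
    rw [hw]
    field_simp
  have h2c : D (2 * c * j') = 2 * c * j'' * D z := by
    rw [D.leibniz, D.leibniz, hc, h2, show D (2 : K) = 0 from D.map_natCast 2]
    simp only [smul_eq_mul]
    ring
  refine ⟨j' * q ^ 2, j'' * q ^ 4 + 2 * c * j' * q ^ 3,
    j''' * q ^ 6 + 6 * c * j'' * q ^ 5 + 6 * c ^ 2 * j' * q ^ 4, rfl, ?_, ?_, ?_, ?_⟩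
  · rw [h1, hz]; ring
  · rw [D.map_mul_pow_of_reparam h2 hq hz]; push_cast; ring
  · rw [map_add, D.map_mul_pow_of_reparam h3 hq hz, D.map_mul_pow_of_reparam h2c hq hz]
    push_cast; ring
  · rw [modularF_reparam two_ne_zero, hf, mul_zero]

/-- **SL₂(C)-invariance of the differential equation of `j`.**
Let `(K, D)` be a differential field of characteristic zero, and let
`z, j, j', j'', j''' ∈ K` satisfy `D z ≠ 0`, `j ≠ 0`, `j ≠ 1728`, `j' ≠ 0`,
`D j = j'·D z`, `D j' = j''·D z`, `D j'' = j'''·D z` and `f(j, j', j'', j''') = 0`.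
If `a, b, c, d` are constants with `ad - bc = 1` and `cz + d ≠ 0`, and
`w = (az + b)/(cz + d)`, then there are `J₁, J₂, J₃ ∈ K` with
`J₁ = j'·(cz + d)²`, `D j = J₁·D w`, `D J₁ = J₂·D w`, `D J₂ = J₃·D w` and
`f(j, J₁, J₂, J₃) = 0`. -/
theorem sl2_invariance_of_j_equation
    {K : Type*} [Field K] [CharZero K]
    (D : Derivation ℤ K K)
    (z j j' j'' j''' : K)
    (hz : D z ≠ 0) (hj0 : j ≠ 0) (hj1728 : j ≠ 1728) (hj'0 : j' ≠ 0)
    (h1 : D j = j' * D z) (h2 : D j' = j'' * D z) (h3 : D j'' = j''' * D z)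
    (hf : modularF j j' j'' j''' = 0)
    (a b c d : K)
    (ha : D a = 0) (hb : D b = 0) (hc : D c = 0) (hd : D d = 0)
    (hdet : a * d - b * c = 1) (hden : c * z + d ≠ 0) :
    ∃ J₁ J₂ J₃ : K,
      J₁ = j' * (c * z + d) ^ 2 ∧
      D j = J₁ * D ((a * z + b) / (c * z + d)) ∧
      D J₁ = J₂ * D ((a * z + b) / (c * z + d)) ∧
      D J₂ = J₃ * D ((a * z + b) / (c * z + d)) ∧
      modularF j J₁ J₂ J₃ = 0 :=
  sl2_invariance_of_j_equation_general D z j j' j'' j''' h1 h2 h3 hf a b c d ha hb hc hd hdet hden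
end

section
/- Let C be a field of characteristic zero, let p_1, …, p_k ∈ C[X_1, …, X_n] generate a radical ideal I, and let P be a minimal prime ideal over I. Let L be a field extension of C and let w ∈ L^n be a generic point of P over C, i.e. { p ∈ C[X_1, …, X_n] : p(w) = 0 } = P. Then for every polynomial q ∈ P, the rank over L of the k × n Jacobian matrix (∂p_l/∂X_i (w))_{l,i} equals the rank of the (k+1) × n matrix obtained by appending the row (∂q/∂X_i (w))_i. -/
open MvPolynomial

/-!
Since `P` is minimal over `I`, after localizing at `P` it becomes the radical of `I`; as `I` is
radical, every `q ∈ P` therefore satisfies `g * q ∈ I` for some `g ∉ P`. Differentiating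
`g * q = ∑ aₗ pₗ` at the common zero `w` kills the terms in which `q` or a `pₗ` is not
differentiated, leaving `g(w) ∇q(w) = ∑ aₗ(w) ∇pₗ(w)`. As `g(w) ≠ 0`, the row `∇q(w)` is a
combination of the rows `∇pₗ(w)`, and appending it leaves the row space unchanged.
-/

theorem Ideal.IsRadical.exists_notMem_mul_mem_of_mem_minimalPrimes {R : Type*} [CommRing R]
    {I P : Ideal R} (hI : I.IsRadical) (hP : P ∈ I.minimalPrimes) {x : R} (hx : x ∈ P) :
    ∃ s ∉ P, s * x ∈ I := by
  have := hP.isPrime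
  obtain ⟨m, hm⟩ : algebraMap R (Localization.AtPrime P) x ∈
      (I.map (algebraMap R (Localization.AtPrime P))).radical := by
    rw [IsLocalization.AtPrime.radical_map_of_mem_minimalPrimes _ P I hP]
    exact Ideal.mem_map_of_mem _ hx
  rw [← map_pow, IsLocalization.algebraMap_mem_map_algebraMap_iff P.primeCompl] at hm
  obtain ⟨s, hs, hsx⟩ := hm
  refine ⟨s, hs, hI ⟨m + 1, ?_⟩⟩
  have hpow : (s * x) ^ (m + 1) = s ^ m * x * (s * x ^ m) := by ring
  exact hpow ▸ I.mul_mem_left _ hsx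

theorem Matrix.rank_of_vecCons_of_mem_span {R n : Type*} [Field R] [Fintype n] {k : ℕ}
    (rows : Fin k → n → R) {r : n → R} (hr : r ∈ Submodule.span R (Set.range rows)) :
    (Matrix.of (Matrix.vecCons r rows)).rank = (Matrix.of rows).rank := by
  rw [Matrix.rank_eq_finrank_span_row, Matrix.rank_eq_finrank_span_row]
  change Module.finrank R (Submodule.span R (Set.range (Matrix.vecCons r rows))) =
    Module.finrank R (Submodule.span R (Set.range rows))
  rw [Matrix.range_cons, Set.singleton_union, Submodule.span_insert_eq_span hr]

namespace MvPolynomial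

variable {σ ι R L : Type*} [CommRing R] [Field L] [Algebra R L]

theorem aeval_pderiv_mul_of_aeval_eq_zero (w : σ → L) (i : σ) (g : MvPolynomial σ R)
    {q : MvPolynomial σ R} (hq : aeval w q = 0) :
    aeval w (pderiv i (g * q)) = aeval w g * aeval w (pderiv i q) := by
  simp [hq]

theorem aeval_pderiv_mem_span_of_mem_span [Fintype ι] (w : σ → L) {p : ι → MvPolynomial σ R}
    (hp : ∀ l, aeval w (p l) = 0) {r : MvPolynomial σ R} (hr : r ∈ Ideal.span (Set.range p)) :
    (fun i => aeval w (pderiv i r)) ∈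
      Submodule.span L (Set.range fun l i => aeval w (pderiv i (p l))) := by
  obtain ⟨a, rfl⟩ := Ideal.mem_span_range_iff_exists_fun.mp hr
  refine (Submodule.mem_span_range_iff_exists_fun L).mpr ⟨fun l => aeval w (a l), ?_⟩
  ext i
  simp [hp, mul_comm]

end MvPolynomial

theorem jacobian_rank_append_of_mem_prime_general
    {C : Type*} [Field C] {n k : ℕ}
    (p : Fin k → MvPolynomial (Fin n) C)
    (hrad : (Ideal.span (Set.range p)).IsRadical)
    (P : Ideal (MvPolynomial (Fin n) C))
    (hP : P ∈ (Ideal.span (Set.range p)).minimalPrimes)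
    {L : Type*} [Field L] [Algebra C L]
    (w : Fin n → L)
    (hw : ∀ r : MvPolynomial (Fin n) C, aeval w r = 0 ↔ r ∈ P)
    (q : MvPolynomial (Fin n) C) (hq : q ∈ P) :
    (Matrix.of fun (l : Fin k) (i : Fin n) => aeval w (pderiv i (p l))).rank =
      (Matrix.of (Matrix.vecCons (fun i : Fin n => aeval w (pderiv i q))
        (fun (l : Fin k) (i : Fin n) => aeval w (pderiv i (p l))))).rank := by
  obtain ⟨g, hgP, hgq⟩ := hrad.exists_notMem_mul_mem_of_mem_minimalPrimes hP hq
  have hpw : ∀ l, aeval w (p l) = 0 :=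
    fun l => (hw _).mpr (hP.1.2 (Ideal.subset_span (Set.mem_range_self l)))
  have hgw : aeval w g ≠ 0 := fun h => hgP ((hw g).mp h)
  have hspan := aeval_pderiv_mem_span_of_mem_span w hpw hgq
  simp only [aeval_pderiv_mul_of_aeval_eq_zero w _ g ((hw q).mpr hq)] at hspan
  change aeval w g • (fun i => aeval w (pderiv i q)) ∈ _ at hspan
  rw [Submodule.smul_mem_iff _ hgw] at hspan
  exact (Matrix.rank_of_vecCons_of_mem_span _ hspan).symm

/-- Let `p₁, …, p_k ∈ C[X₁, …, Xₙ]` generate a radical ideal `I`,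
let `P` be a minimal prime over `I`, and let `w ∈ Lⁿ` be a generic point of `P`
over `C` (for a field extension `L` of `C`).  Then for every `q ∈ P`, appending the
row of partial derivatives of `q` at `w` to the Jacobian matrix of `p₁, …, p_k`
at `w` does not change its rank over `L`. -/
theorem jacobian_rank_append_of_mem_prime
    {C : Type*} [Field C] [CharZero C] {n k : ℕ}
    (p : Fin k → MvPolynomial (Fin n) C)
    (hrad : (Ideal.span (Set.range p)).IsRadical)
    (P : Ideal (MvPolynomial (Fin n) C))
    (hP : P ∈ (Ideal.span (Set.range p)).minimalPrimes)
    {L : Type*} [Field L] [Algebra C L]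
    (w : Fin n → L)
    (hw : ∀ r : MvPolynomial (Fin n) C, aeval w r = 0 ↔ r ∈ P)
    (q : MvPolynomial (Fin n) C) (hq : q ∈ P) :
    (Matrix.of fun (l : Fin k) (i : Fin n) => aeval w (pderiv i (p l))).rank =
      (Matrix.of (Matrix.vecCons (fun i : Fin n => aeval w (pderiv i q))
        (fun (l : Fin k) (i : Fin n) => aeval w (pderiv i (p l))))).rank :=
  jacobian_rank_append_of_mem_prime_general p hrad P hP w hw q hq
end
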